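/- arXiv:1204.1126 — 2 statements merged into one kernel-verified Lean document; each statement's English description precedes it below -/
import Mathlib

section
/- Let $B = \{B_t\}$ be an $n \times d$ matrix of independent standard Brownian motions and set $X_t = B_t^\top B_t$. Then $X$ is a positive semidefinite matrix-valued process satisfying $dX_t = n I_d\,dt + \sqrt{X_t}\,dW_t + dW_t^\top \sqrt{X_t}$ for some $d \times d$ matrix Brownian motion $W$; i.e. $X$ is a Wishart process $WIS_d(B_0^\top B_0, n, 0, I_d)$. -/
open Real MeasureTheory ProbabilityTheory Filter Set

noncomputable section

/-- A standard one-dimensional Brownian motion: starts at `0` a.s., has continuous paths,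
Gaussian increments `W_t - W_s ~ N(0, t-s)`, and independent increments. -/
structure IsStdBrownianMotion {Ω : Type*} [MeasurableSpace Ω] (μ : Measure Ω)
    (W : ℝ → Ω → ℝ) : Prop where
  start : ∀ᵐ ω ∂μ, W 0 ω = 0
  cont : ∀ᵐ ω ∂μ, Continuous fun t => W t ω
  meas : ∀ t, Measurable (W t)
  incr : ∀ s t : ℝ, 0 ≤ s → s ≤ t →
    Measure.map (fun ω => W t ω - W s ω) μ = gaussianReal 0 (Real.toNNReal (t - s))
  indep : ∀ t : ℕ → ℝ, (∀ n, 0 ≤ t n) → Monotone t →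
    iIndepFun
      (fun n ω => W (t (n + 1)) ω - W (t n) ω) μ

/-- A local martingale indexed by `ℝ` with respect to the filtration `F`: there is a localizing
sequence of stopping times tending to infinity such that each stopped process is a
martingale. -/
def IsLocalMartingale {Ω : Type*} {m : MeasurableSpace Ω} (F : Filtration ℝ m)
    (X : ℝ → Ω → ℝ) (μ : Measure Ω) : Prop :=
  ∃ τ : ℕ → Ω → ℝ, (∀ n, IsStoppingTime F (fun ω => ((τ n ω : ℝ) : WithTop ℝ))) ∧
    (∀ ω, Tendsto (fun n => τ n ω) atTop atTop) ∧
    ∀ n, Martingale (MeasureTheory.stoppedProcess X (fun ω => ((τ n ω : ℝ) : WithTop ℝ))) F μ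

/-- Martingale-problem formulation of the one-dimensional SDE
`dX_t = drift_t dt + diff_t dW_t`: for every `C²` function `f`, the process
`f(X_t) - ∫₀ᵗ (drift_s f'(X_s) + ½ diff_s² f''(X_s)) ds` is a local martingale. -/
def SolvesSDE {Ω : Type*} {m : MeasurableSpace Ω} (F : Filtration ℝ m)
    (X drift diff : ℝ → Ω → ℝ) (μ : Measure Ω) : Prop :=
  ∀ f : ℝ → ℝ, ContDiff ℝ 2 f →
    IsLocalMartingale F (fun t ω => f (X t ω) -
      ∫ s in (0:ℝ)..t,
        (drift s ω * deriv f (X s ω) +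
          (1 / 2) * diff s ω ^ 2 * iteratedDeriv 2 f (X s ω))) μ

/-- Martingale-problem formulation of a multidimensional SDE with drift process `drift` and
diffusion (quadratic covariation rate) matrix process `covar`: for every `C²` function `f`,
`f(X_t) - ∫₀ᵗ (∑ᵢ driftᵢ ∂ᵢf + ½ ∑ᵢⱼ covarᵢⱼ ∂ᵢⱼf)(X_s) ds` is a local martingale. -/
def SolvesSDEVec {Ω : Type*} {m : MeasurableSpace Ω} {ι : Type*} [Fintype ι] [DecidableEq ι]
    (F : Filtration ℝ m) (X : ℝ → Ω → ι → ℝ) (drift : ℝ → Ω → ι → ℝ)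
    (covar : ℝ → Ω → Matrix ι ι ℝ) (μ : Measure Ω) : Prop :=
  ∀ f : (ι → ℝ) → ℝ, ContDiff ℝ 2 f →
    IsLocalMartingale F (fun t ω => f (X t ω) -
      ∫ s in (0:ℝ)..t,
        ((∑ i, drift s ω i * fderiv ℝ f (X s ω) (Pi.single i 1)) +
          (1 / 2) * ∑ i, ∑ j, covar s ω i j *
            fderiv ℝ (fun y => fderiv ℝ f y (Pi.single i 1)) (X s ω) (Pi.single j 1))) μ

/-!
Itô's formula in martingale-problem form: if `X` solves the martingale problem with drift `b`
and diffusion matrix `a`, and `φ` is `C²`, then `φ ∘ X` solves it with drift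
`Dφ b + ½ ∑ᵢⱼ aᵢⱼ D²φ(eⱼ, eᵢ)` and diffusion matrix `Dφ a Dφᵀ`, because the second-order chain
rule turns the generator applied to `f ∘ φ` at `x` into the generator with these coefficients
applied to `f` at `φ x`. For Brownian motion (`b = 0`, `a = 1`) and the quadratic map
`Q b = bᵀb`, the second derivative `D²Q(h, k) = hᵀk + kᵀh` is constant, so the Itô correction
`½ ∑_q D²Q(e_q, e_q)` is `n I`, and `DQ DQᵀ` is the Wishart covariation. Positive
semidefiniteness holds because `bᵀb` is a Gram matrix.
-/

theorem fderiv_clm_apply_const_apply {E F G : Type*} [NormedAddCommGroup E] [NormedSpace ℝ E]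
    [NormedAddCommGroup F] [NormedSpace ℝ F] [NormedAddCommGroup G] [NormedSpace ℝ G]
    {f : E → F →L[ℝ] G} {x : E} (hf : DifferentiableAt ℝ f x) (v : F) (w : E) :
    fderiv ℝ (fun y => f y v) x w = fderiv ℝ f x w v := by
  rw [fderiv_clm_apply hf (differentiableAt_const v)]
  simp

theorem fderiv_fderiv_comp_apply {E F G : Type*} [NormedAddCommGroup E] [NormedSpace ℝ E]
    [NormedAddCommGroup F] [NormedSpace ℝ F] [NormedAddCommGroup G] [NormedSpace ℝ G]
    {f : F → G} {φ : E → F} (hf : ContDiff ℝ 2 f) (hφ : ContDiff ℝ 2 φ) (x v w : E) :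
    fderiv ℝ (fderiv ℝ (f ∘ φ)) x w v =
      fderiv ℝ f (φ x) (fderiv ℝ (fderiv ℝ φ) x w v) +
        fderiv ℝ (fderiv ℝ f) (φ x) (fderiv ℝ φ x w) (fderiv ℝ φ x v) := by
  have hf' : Differentiable ℝ (fderiv ℝ f) :=
    (hf.fderiv_right (m := 1) le_rfl).differentiable one_ne_zero
  have hφ' : Differentiable ℝ (fderiv ℝ φ) :=
    (hφ.fderiv_right (m := 1) le_rfl).differentiable one_ne_zero
  have hchain : fderiv ℝ (f ∘ φ) = fun y => (fderiv ℝ f (φ y)).comp (fderiv ℝ φ y) := by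
    funext y
    exact fderiv_comp y (hf.differentiable two_ne_zero _) (hφ.differentiable two_ne_zero _)
  have hfφ : DifferentiableAt ℝ (fun y => fderiv ℝ f (φ y)) x :=
    (hf' _).comp x (hφ.differentiable two_ne_zero x)
  rw [hchain, fderiv_clm_comp hfφ (hφ' x),
    fderiv_fun_comp x (hf' _) (hφ.differentiable two_ne_zero x)]
  simp

section Generator

variable {ι : Type*} [Fintype ι] [DecidableEq ι]

theorem ContinuousLinearMap.apply_eq_sum_single {M : Type*} [AddCommGroup M] [Module ℝ M]
    [TopologicalSpace M] (L : (ι → ℝ) →L[ℝ] M) (v : ι → ℝ) :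
    L v = ∑ i, v i • L (Pi.single i 1) := by
  conv_lhs => rw [pi_eq_sum_univ' v]
  simp only [map_sum, map_smul]

theorem ContinuousLinearMap.apply_apply_eq_sum_single (D : (ι → ℝ) →L[ℝ] (ι → ℝ) →L[ℝ] ℝ)
    (u v : ι → ℝ) :
    D u v = ∑ k, ∑ l, u k * v l * D (Pi.single k 1) (Pi.single l 1) := by
  conv_lhs => rw [D.apply_eq_sum_single u]
  simp only [_root_.sum_apply, _root_.smul_apply]
  refine Finset.sum_congr rfl fun k _ => ?_
  rw [(D _).apply_eq_sum_single v, Finset.smul_sum]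
  simp [mul_assoc]

def sdeGenerator (b : ι → ℝ) (a : Matrix ι ι ℝ) (f : (ι → ℝ) → ℝ) (x : ι → ℝ) : ℝ :=
  (∑ i, b i * fderiv ℝ f x (Pi.single i 1)) +
    (1 / 2) * ∑ i, ∑ j, a i j * fderiv ℝ (fun y => fderiv ℝ f y (Pi.single i 1)) x (Pi.single j 1)

theorem solvesSDEVec_iff_sdeGenerator {Ω : Type*} {m : MeasurableSpace Ω} (F : Filtration ℝ m)
    (X : ℝ → Ω → ι → ℝ) (drift : ℝ → Ω → ι → ℝ) (covar : ℝ → Ω → Matrix ι ι ℝ)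
    (μ : Measure Ω) :
    SolvesSDEVec F X drift covar μ ↔ ∀ f : (ι → ℝ) → ℝ, ContDiff ℝ 2 f →
      IsLocalMartingale F (fun t ω => f (X t ω) -
        ∫ s in (0:ℝ)..t, sdeGenerator (drift s ω) (covar s ω) f (X s ω)) μ :=
  Iff.rfl

theorem sdeGenerator_eq {f : (ι → ℝ) → ℝ} (hf : ContDiff ℝ 2 f) (b : ι → ℝ) (a : Matrix ι ι ℝ)
    (x : ι → ℝ) :
    sdeGenerator b a f x = fderiv ℝ f x b +
      (1 / 2) * ∑ i, ∑ j, a i j * fderiv ℝ (fderiv ℝ f) x (Pi.single j 1) (Pi.single i 1) := by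
  have hdf : DifferentiableAt ℝ (fderiv ℝ f) x :=
    (hf.fderiv_right (m := 1) le_rfl).differentiable one_ne_zero x
  simp only [sdeGenerator, fderiv_clm_apply_const_apply hdf,
    (fderiv ℝ f x).apply_eq_sum_single b, smul_eq_mul]

end Generator

section Ito

variable {ι κ : Type*} [Fintype ι] [DecidableEq ι]

def jacobian (φ : (ι → ℝ) → κ → ℝ) (x : ι → ℝ) : Matrix κ ι ℝ :=
  LinearMap.toMatrix' (fderiv ℝ φ x : (ι → ℝ) →ₗ[ℝ] κ → ℝ)

def itoDrift (φ : (ι → ℝ) → κ → ℝ) (b : ι → ℝ) (a : Matrix ι ι ℝ) (x : ι → ℝ) : κ → ℝ :=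
  fderiv ℝ φ x b +
    (1 / 2 : ℝ) • ∑ i, ∑ j, a i j • fderiv ℝ (fderiv ℝ φ) x (Pi.single j 1) (Pi.single i 1)

def itoCovar (φ : (ι → ℝ) → κ → ℝ) (a : Matrix ι ι ℝ) (x : ι → ℝ) : Matrix κ κ ℝ :=
  jacobian φ x * a * (jacobian φ x).transpose

theorem itoDrift_zero_one (φ : (ι → ℝ) → κ → ℝ) (x : ι → ℝ) :
    itoDrift φ 0 1 x =
      (1 / 2 : ℝ) • ∑ i, fderiv ℝ (fderiv ℝ φ) x (Pi.single i 1) (Pi.single i 1) := by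
  simp [itoDrift, Matrix.one_apply]

variable [Fintype κ] [DecidableEq κ]

theorem sum_mul_apply_fderiv_eq_sum_itoCovar_mul (φ : (ι → ℝ) → κ → ℝ) (a : Matrix ι ι ℝ)
    (x : ι → ℝ) (D : (κ → ℝ) →L[ℝ] (κ → ℝ) →L[ℝ] ℝ) :
    ∑ i, ∑ j, a i j * D (fderiv ℝ φ x (Pi.single j 1)) (fderiv ℝ φ x (Pi.single i 1)) =
      ∑ k, ∑ l, itoCovar φ a x k l * D (Pi.single l 1) (Pi.single k 1) := by
  have hcol : ∀ j, fderiv ℝ φ x (Pi.single j 1) = fun k => jacobian φ x k j := fun j => rfl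
  simp only [hcol, D.apply_apply_eq_sum_single (fun k => jacobian φ x k _), itoCovar,
    Matrix.mul_apply, Matrix.transpose_apply, Finset.mul_sum, Finset.sum_mul,
    ← Fintype.sum_prod_type']
  exact Fintype.sum_equiv
    ⟨fun p => (p.2.2.2, p.2.2.1, p.2.1, p.1), fun q => (q.2.2.2, q.2.2.1, q.2.1, q.1),
      fun _ => rfl, fun _ => rfl⟩ _ _ fun _ => by dsimp only [Equiv.coe_fn_mk]; ring

theorem sdeGenerator_comp {f : (κ → ℝ) → ℝ} {φ : (ι → ℝ) → κ → ℝ} (hf : ContDiff ℝ 2 f)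
    (hφ : ContDiff ℝ 2 φ) (b : ι → ℝ) (a : Matrix ι ι ℝ) (x : ι → ℝ) :
    sdeGenerator b a (f ∘ φ) x = sdeGenerator (itoDrift φ b a x) (itoCovar φ a x) f (φ x) := by
  rw [sdeGenerator_eq (hf.comp hφ), sdeGenerator_eq hf, itoDrift,
    ← sum_mul_apply_fderiv_eq_sum_itoCovar_mul]
  simp only [fderiv_fderiv_comp_apply hf hφ, fderiv_comp x (hf.differentiable two_ne_zero _)
    (hφ.differentiable two_ne_zero x), map_add, map_smul, map_sum,
    ContinuousLinearMap.comp_apply, smul_eq_mul, mul_add, Finset.sum_add_distrib]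
  ring

theorem SolvesSDEVec.comp {Ω : Type*} {m : MeasurableSpace Ω} {F : Filtration ℝ m}
    {X : ℝ → Ω → ι → ℝ} {drift : ℝ → Ω → ι → ℝ} {covar : ℝ → Ω → Matrix ι ι ℝ}
    {μ : Measure Ω} (hX : SolvesSDEVec F X drift covar μ) {φ : (ι → ℝ) → κ → ℝ}
    (hφ : ContDiff ℝ 2 φ) :
    SolvesSDEVec F (fun t ω => φ (X t ω))
      (fun t ω => itoDrift φ (drift t ω) (covar t ω) (X t ω))
      (fun t ω => itoCovar φ (covar t ω) (X t ω)) μ := by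
  rw [solvesSDEVec_iff_sdeGenerator] at hX ⊢
  intro f hf
  simpa only [sdeGenerator_comp hf hφ, Function.comp_apply] using hX (f ∘ φ) (hf.comp hφ)

end Ito

section ColumnGram

variable {ρ ι : Type*} [Fintype ρ] [Fintype ι]

-- `columnPairing u v = uᵀ v`, for `ρ × ι` matrices stored as functions on `ρ × ι`.
def columnPairing : ((ρ × ι) → ℝ) →L[ℝ] ((ρ × ι) → ℝ) →L[ℝ] (ι × ι → ℝ) :=
  LinearMap.toContinuousLinearMap <| LinearMap.toContinuousLinearMap.toLinearMap ∘ₗ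
    LinearMap.mk₂ ℝ (fun u v p => ∑ k, u (k, p.1) * v (k, p.2))
      (fun _ _ _ => by ext; simp [add_mul, Finset.sum_add_distrib])
      (fun _ _ _ => by ext; simp [Finset.mul_sum, mul_assoc])
      (fun _ _ _ => by ext; simp [mul_add, Finset.sum_add_distrib])
      (fun _ _ _ => by ext; simp [Finset.mul_sum, mul_left_comm])

theorem columnPairing_apply (u v : (ρ × ι) → ℝ) (p : ι × ι) :
    columnPairing u v p = ∑ k, u (k, p.1) * v (k, p.2) :=
  rfl

theorem columnPairing_single_left [DecidableEq ρ] [DecidableEq ι] (q : ρ × ι)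
    (v : (ρ × ι) → ℝ) (p : ι × ι) :
    columnPairing (Pi.single q 1) v p = if q.2 = p.1 then v (q.1, p.2) else 0 := by
  simp only [columnPairing_apply, Pi.single_apply, Prod.ext_iff, ite_and, ite_mul, one_mul,
    zero_mul, Finset.sum_ite_eq', Finset.mem_univ, if_true, eq_comm]

theorem columnPairing_single_right [DecidableEq ρ] [DecidableEq ι] (u : (ρ × ι) → ℝ)
    (q : ρ × ι) (p : ι × ι) :
    columnPairing u (Pi.single q 1) p = if q.2 = p.2 then u (q.1, p.1) else 0 := by
  simp only [columnPairing_apply, Pi.single_apply, Prod.ext_iff, ite_and, mul_ite, mul_one,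
    mul_zero, Finset.sum_ite_eq', Finset.mem_univ, if_true, eq_comm]

def columnGram (b : (ρ × ι) → ℝ) : ι × ι → ℝ :=
  fun p => ∑ k, b (k, p.1) * b (k, p.2)

theorem hasFDerivAt_columnGram (b : (ρ × ι) → ℝ) :
    HasFDerivAt columnGram (columnPairing b + columnPairing.flip b) b := by
  refine (columnPairing.hasFDerivAt_of_bilinear (hasFDerivAt_id b) (hasFDerivAt_id b))
    |>.congr_fderiv ?_
  ext
  simp only [add_apply, ContinuousLinearMap.flip_apply, id, ContinuousLinearMap.precompR_apply,
    ContinuousLinearMap.precompL_apply, ContinuousLinearMap.compL_apply,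
    ContinuousLinearMap.comp_id, ContinuousLinearMap.id_apply]

theorem fderiv_columnGram :
    fderiv ℝ (columnGram (ρ := ρ) (ι := ι)) =
      columnPairing (ρ := ρ) (ι := ι) + (columnPairing (ρ := ρ) (ι := ι)).flip :=
  funext fun b => (hasFDerivAt_columnGram b).fderiv

theorem fderiv_fderiv_columnGram (x : (ρ × ι) → ℝ) :
    fderiv ℝ (fderiv ℝ columnGram) x =
      columnPairing (ρ := ρ) (ι := ι) + (columnPairing (ρ := ρ) (ι := ι)).flip := by
  rw [fderiv_columnGram]
  exact (columnPairing (ρ := ρ) (ι := ι) + (columnPairing (ρ := ρ) (ι := ι)).flip).fderiv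

theorem contDiff_columnGram : ContDiff ℝ 2 (columnGram (ρ := ρ) (ι := ι)) :=
  show ContDiff ℝ 2 fun b => columnPairing b b from
    (columnPairing (ρ := ρ) (ι := ι)).isBoundedBilinearMap.contDiff.comp
      (contDiff_id.prodMk contDiff_id)

theorem posSemidef_columnGram (b : (ρ × ι) → ℝ) :
    (Matrix.of fun i j : ι => columnGram b (i, j)).PosSemidef := by
  convert Matrix.posSemidef_conjTranspose_mul_self (Matrix.of fun (k : ρ) (i : ι) => b (k, i))
  ext i j
  simp [columnGram, Matrix.mul_apply]

variable [DecidableEq ρ] [DecidableEq ι]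

theorem sum_columnPairing_single_self (p : ι × ι) :
    ∑ q : ρ × ι, columnPairing (Pi.single q 1) (Pi.single q 1) p =
      if p.1 = p.2 then (Fintype.card ρ : ℝ) else 0 := by
  obtain ⟨i, j⟩ := p
  simp only [Fintype.sum_prod_type, columnPairing_single_left, Pi.single_apply, Prod.mk.injEq,
    true_and, Finset.sum_ite_eq', Finset.mem_univ, if_true]
  by_cases h : i = j
  · subst h
    simp
  · simp [h, Ne.symm h]

theorem itoDrift_columnGram (x : (ρ × ι) → ℝ) :
    itoDrift columnGram 0 1 x = fun p => if p.1 = p.2 then (Fintype.card ρ : ℝ) else 0 := by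
  ext p
  rw [itoDrift_zero_one, fderiv_fderiv_columnGram]
  simp only [add_apply, ContinuousLinearMap.flip_apply, ← two_smul ℝ, Finset.smul_sum, smul_smul]
  norm_num [Finset.sum_apply, sum_columnPairing_single_self]

theorem jacobian_columnGram_apply (x : (ρ × ι) → ℝ) (p : ι × ι) (q : ρ × ι) :
    jacobian columnGram x p q =
      (if q.2 = p.2 then x (q.1, p.1) else 0) + (if q.2 = p.1 then x (q.1, p.2) else 0) := by
  simp only [jacobian, LinearMap.toMatrix'_apply, ContinuousLinearMap.coe_coe, fderiv_columnGram,
    add_apply, ContinuousLinearMap.flip_apply, columnPairing_single_left,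
    columnPairing_single_right, Pi.add_apply]

theorem itoCovar_columnGram (x : (ρ × ι) → ℝ) :
    itoCovar columnGram 1 x = Matrix.of fun p q : ι × ι =>
      (∑ k, x (k, p.1) * x (k, q.1)) * (if p.2 = q.2 then 1 else 0)
        + (∑ k, x (k, p.1) * x (k, q.2)) * (if p.2 = q.1 then 1 else 0)
        + (∑ k, x (k, p.2) * x (k, q.1)) * (if p.1 = q.2 then 1 else 0)
        + (∑ k, x (k, p.2) * x (k, q.2)) * (if p.1 = q.1 then 1 else 0) := by
  ext p q
  simp only [itoCovar, Matrix.mul_one, Matrix.mul_apply, Matrix.transpose_apply,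
    jacobian_columnGram_apply, Fintype.sum_prod_type, Matrix.of_apply, add_mul, mul_add,
    ite_mul, mul_ite, zero_mul, mul_zero, mul_one, Finset.sum_add_distrib, Finset.sum_ite_eq',
    Finset.mem_univ, if_true, Finset.sum_ite_irrel, Finset.sum_const_zero,
    eq_comm (a := q.1), eq_comm (a := q.2)]
  ring

end ColumnGram

theorem matrix_brownian_square_is_wishart_general
    {Ω : Type*} [m : MeasurableSpace Ω] (μ : Measure Ω)
    (n d : ℕ)
    (F : Filtration ℝ m) (B : ℝ → Ω → Fin n × Fin d → ℝ)
    (hBM : SolvesSDEVec F B (fun _ _ _ => (0 : ℝ)) (fun _ _ => (1 : Matrix _ _ ℝ)) μ) :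
    (∀ t ω, Matrix.PosSemidef
        (Matrix.of fun i j : Fin d => ∑ k : Fin n, B t ω (k, i) * B t ω (k, j)))
      ∧ SolvesSDEVec F
          (fun t ω (p : Fin d × Fin d) => ∑ k : Fin n, B t ω (k, p.1) * B t ω (k, p.2))
          (fun _ _ p => if p.1 = p.2 then (n : ℝ) else 0)
          (fun t ω => Matrix.of fun p q : Fin d × Fin d =>
            (∑ k : Fin n, B t ω (k, p.1) * B t ω (k, q.1)) * (if p.2 = q.2 then 1 else 0)
            + (∑ k : Fin n, B t ω (k, p.1) * B t ω (k, q.2)) * (if p.2 = q.1 then 1 else 0)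
            + (∑ k : Fin n, B t ω (k, p.2) * B t ω (k, q.1)) * (if p.1 = q.2 then 1 else 0)
            + (∑ k : Fin n, B t ω (k, p.2) * B t ω (k, q.2)) * (if p.1 = q.1 then 1 else 0))
          μ := by
  refine ⟨fun t ω => posSemidef_columnGram (B t ω), ?_⟩
  have h := hBM.comp (contDiff_columnGram (ρ := Fin n) (ι := Fin d))
  simp only [← Pi.zero_def, itoDrift_columnGram, itoCovar_columnGram, Fintype.card_fin] at h
  exact h

/-- if `B` is an `n × d` matrix of independent standard Brownian motions
(formulated as the martingale problem with zero drift and identity diffusion matrix), then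
`X_t = B_tᵀ B_t` is a positive semidefinite matrix-valued process satisfying the Wishart SDE
`dX_t = n I_d dt + √(X_t) dW_t + dW_tᵀ √(X_t)`, i.e. `X` is the Wishart process
`WIS_d(B₀ᵀB₀, n, 0, I_d)`; the SDE is expressed as the martingale problem with drift `n I_d`
and quadratic covariation rate
`d⟨X_{ij}, X_{kl}⟩ = (X_{ik} δ_{jl} + X_{il} δ_{jk} + X_{jk} δ_{il} + X_{jl} δ_{ik}) dt`. -/
theorem matrix_brownian_square_is_wishart
    {Ω : Type*} [m : MeasurableSpace Ω] (μ : Measure Ω) [IsProbabilityMeasure μ]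
    (n d : ℕ) (hn : 0 < n) (hd : 0 < d)
    (F : Filtration ℝ m) (B : ℝ → Ω → Fin n × Fin d → ℝ)
    (hBM : SolvesSDEVec F B (fun _ _ _ => (0 : ℝ)) (fun _ _ => (1 : Matrix _ _ ℝ)) μ)
    (hstart : ∀ᵐ ω ∂μ, ∀ p, B 0 ω p = 0) :
    (∀ t ω, Matrix.PosSemidef
        (Matrix.of fun i j : Fin d => ∑ k : Fin n, B t ω (k, i) * B t ω (k, j)))
      ∧ SolvesSDEVec F
          (fun t ω (p : Fin d × Fin d) => ∑ k : Fin n, B t ω (k, p.1) * B t ω (k, p.2))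
          (fun _ _ p => if p.1 = p.2 then (n : ℝ) else 0)
          (fun t ω => Matrix.of fun p q : Fin d × Fin d =>
            (∑ k : Fin n, B t ω (k, p.1) * B t ω (k, q.1)) * (if p.2 = q.2 then 1 else 0)
            + (∑ k : Fin n, B t ω (k, p.1) * B t ω (k, q.2)) * (if p.2 = q.1 then 1 else 0)
            + (∑ k : Fin n, B t ω (k, p.2) * B t ω (k, q.1)) * (if p.1 = q.2 then 1 else 0)
            + (∑ k : Fin n, B t ω (k, p.2) * B t ω (k, q.2)) * (if p.1 = q.1 then 1 else 0))
          μ :=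
  matrix_brownian_square_is_wishart_general (m := m) μ n d F B hBM
end
end

section
/- Specialize the squared Bessel case: for the PDE $u_t = 2x u_{xx} + \delta u_x$ (i.e. $b=2$, $\gamma=1$, $f = \delta$, $g = 0$), the drift $h(x) = \delta$ satisfies the Riccati condition $bxh' - bh + \tfrac12 h^2 = B$ with $A=0$, $B = \tfrac12\delta^2 - 2\delta$, and the resulting symmetry solution with $u_0 = 1$ is $\overline{U}_\varepsilon(x,t) = (1+4\varepsilon t)^{-\delta/2}\exp\{-\tfrac{4\varepsilon x}{2(1+4\varepsilon t)}\}$; in particular $\overline{U}_\varepsilon$ solves $u_t = 2xu_{xx} + \delta u_x$ for all $\varepsilon$ with $1 + 4\varepsilon t > 0$. -/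
/-!
In the space variable `Ū_ε` is a constant multiple of `exp (k x)` with `k = -2ε/(1+4εt)`, so
`u_x = k u` and `u_xx = k² u`. Logarithmic differentiation in time gives
`u_t / u = -2δε/(1+4εt) + 8ε²x/(1+4εt)²`, which is exactly `2x k² + δ k`.
-/

open Real

noncomputable section

def squaredBesselSymmetrySolution (δ ε x t : ℝ) : ℝ :=
  (1 + 4 * ε * t) ^ (-(δ / 2)) * exp (-(4 * ε * x) / (2 * (1 + 4 * ε * t)))

namespace squaredBesselSymmetrySolution

variable (δ ε : ℝ)

theorem iteratedDeriv_space (n : ℕ) (x t : ℝ) :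
    iteratedDeriv n (squaredBesselSymmetrySolution δ ε · t) x
      = (-(2 * ε) / (1 + 4 * ε * t)) ^ n * squaredBesselSymmetrySolution δ ε x t := by
  have hlin : ∀ y, -(4 * ε * y) / (2 * (1 + 4 * ε * t)) = -(2 * ε) / (1 + 4 * ε * t) * y :=
    fun y => by rw [← div_div]; ring
  simp only [squaredBesselSymmetrySolution, hlin, iteratedDeriv_const_mul_field,
    iteratedDeriv_exp_const_mul]
  ring

theorem hasDerivAt_time {x t : ℝ} (hc : 0 < 1 + 4 * ε * t) :
    HasDerivAt (squaredBesselSymmetrySolution δ ε x)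
      ((-(2 * δ * ε) / (1 + 4 * ε * t) + 8 * ε ^ 2 * x / (1 + 4 * ε * t) ^ 2)
        * squaredBesselSymmetrySolution δ ε x t) t := by
  have hlin : HasDerivAt (fun τ : ℝ => 1 + 4 * ε * τ) (4 * ε) t := by
    simpa using ((hasDerivAt_id t).const_mul (4 * ε)).const_add 1
  have hpow := hlin.rpow_const (p := -(δ / 2)) (Or.inl hc.ne')
  have hexp := ((hasDerivAt_const t (-(4 * ε * x))).fun_div (hlin.const_mul 2)
    (by positivity)).exp
  refine (hpow.mul hexp).congr_deriv ?_
  rw [squaredBesselSymmetrySolution, rpow_sub hc, rpow_one]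
  field_simp
  ring

end squaredBesselSymmetrySolution

/-- the squared Bessel specialization of the Lie symmetry. For the PDE
`u_t = 2x u_xx + δ u_x` (i.e. `b = 2`, `γ = 1`, `f = δ`, `g = 0`), the constant drift
`h(x) = δ` satisfies the Riccati condition `b x h' - b h + h²/2 = B` with `A = 0`,
`B = δ²/2 - 2δ`, and the symmetry solution obtained from the stationary solution `u₀ = 1`,
`Ū_ε(x,t) = (1+4εt)^{-δ/2} exp(-4εx/(2(1+4εt)))`, solves `u_t = 2x u_xx + δ u_x`
for all `ε` with `1 + 4εt > 0`. -/
theorem squaredBessel_lie_symmetry_solution (δ : ℝ) :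
    (∀ x : ℝ, 0 < x →
      2 * x * deriv (fun _ : ℝ => δ) x - 2 * δ + δ ^ 2 / 2 = δ ^ 2 / 2 - 2 * δ)
    ∧ ∀ ε x t : ℝ, 0 < x → 0 ≤ t → 0 < 1 + 4 * ε * t →
      deriv (fun τ => (1 + 4 * ε * τ) ^ (-(δ / 2)) *
          Real.exp (-(4 * ε * x) / (2 * (1 + 4 * ε * τ)))) t
        = 2 * x * iteratedDeriv 2
            (fun y => (1 + 4 * ε * t) ^ (-(δ / 2)) *
              Real.exp (-(4 * ε * y) / (2 * (1 + 4 * ε * t)))) x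
          + δ * deriv
              (fun y => (1 + 4 * ε * t) ^ (-(δ / 2)) *
                Real.exp (-(4 * ε * y) / (2 * (1 + 4 * ε * t)))) x := by
  refine ⟨fun x _ => by rw [deriv_const]; ring, fun ε x t _ _ hc => ?_⟩
  change deriv (squaredBesselSymmetrySolution δ ε x) t
    = 2 * x * iteratedDeriv 2 (squaredBesselSymmetrySolution δ ε · t) x
      + δ * deriv (squaredBesselSymmetrySolution δ ε · t) x
  rw [(squaredBesselSymmetrySolution.hasDerivAt_time δ ε hc).deriv, ← iteratedDeriv_one,
    squaredBesselSymmetrySolution.iteratedDeriv_space,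
    squaredBesselSymmetrySolution.iteratedDeriv_space]
  field_simp
  ring
end
end
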